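/- arXiv:1509.09054 — 2 statements merged into one kernel-verified Lean document; each statement's English description precedes it below -/
import Mathlib

section
/- For all natural numbers n, i, j with n ≥ 1: T_{n+i}·U_{n+j} − T_{n−1}·U_{n+1+i+j} = −U_i·T_{j+2}, as an identity of polynomials. -/
open Polynomial Polynomial.Chebyshev

theorem two_T_mul_U' (R : Type*) [CommRing R] (m k : ℤ) :
    2 * T R m * U R k = U R (m + k) + U R (k - m) := by
  induction m using Polynomial.Chebyshev.induct with
  | zero => simp [two_mul]
  | one => rw [T_one]; linear_combination (norm := ring_nf) -U_add_one R k
  | add_two m ih1 ih2 =>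
    have h₁ := U_add_two R (m + k)
    have h₂ := U_sub_two R (k - m)
    have h₃ := T_add_two R m
    linear_combination (norm := ring_nf) 2 * U R k * h₃ - h₁ - h₂ - ih2 + 2 * (X : R[X]) * ih1
  | neg_add_one m ih1 ih2 =>
    have h₁ := U_add_two R (k + m - 1)
    have h₂ := U_add_two R (k - m - 1)
    have h₃ := T_add_two R (-m - 1)
    linear_combination (norm := ring_nf) 2 * U R k * h₃ - h₁ - h₂ - ih2 + 2 * (X : R[X]) * ih1

theorem chebyshev_TU_vajda' (R : Type*) [CommRing R] (n i j : ℕ) (hn : 1 ≤ n) :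
    T R ((n : ℤ) + i) * U R ((n : ℤ) + j) - T R ((n : ℤ) - 1) * U R ((n : ℤ) + 1 + i + j) =
      -(U R (i : ℤ) * T R ((j : ℤ) + 2)) := by
  have hz : T ℤ ((n : ℤ) + i) * U ℤ ((n : ℤ) + j) - T ℤ ((n : ℤ) - 1) * U ℤ ((n : ℤ) + 1 + i + j) =
      -(U ℤ (i : ℤ) * T ℤ ((j : ℤ) + 2)) := by
    have h1 := two_T_mul_U' ℤ ((n : ℤ) + i) ((n : ℤ) + j)
    have h2 := two_T_mul_U' ℤ ((n : ℤ) - 1) ((n : ℤ) + 1 + i + j)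
    have h3 := two_T_mul_U' ℤ ((j : ℤ) + 2) (i : ℤ)
    have h4 := U_neg_sub_two ℤ ((j : ℤ) - i)
    have h2' : (2 : ℤ[X]) ≠ 0 := by norm_num
    apply mul_left_cancel₀ h2'
    linear_combination (norm := ring_nf) h1 - h2 + h3 + h4
  have := congrArg (Polynomial.map (Int.castRingHom R)) hz
  simpa [map_T, map_U] using this
end

section
/- For all n ∈ ℕ and d ≥ 1, the rational function S_{n,d} = Σ_{k=0}^n (U_{d−1} ∘ T_{(d+1)^k}) · Π_{j=0}^k 1/(U_d ∘ T_{(d+1)^j}) equals U_{(d+1)^{n+1}−2} / U_{(d+1)^{n+1}−1}. -/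
open Polynomial Polynomial.Chebyshev Finset

noncomputable def toRat (p : Polynomial ℚ) : RatFunc ℚ := algebraMap (Polynomial ℚ) (RatFunc ℚ) p

noncomputable def Sfrac (n d : ℕ) : RatFunc ℚ :=
  ∑ k ∈ Finset.range (n + 1),
    toRat ((U ℚ ((d : ℤ) - 1)).comp (T ℚ (((d + 1) ^ k : ℕ) : ℤ))) *
      ∏ j ∈ Finset.range (k + 1), (toRat ((U ℚ (d : ℤ)).comp (T ℚ (((d + 1) ^ j : ℕ) : ℤ))))⁻¹

/-!
With `r N = U_{N-2} / U_{N-1}`, the Cassini-type identity `U_a U_b - U_{a-1} U_{b+1} = U_{b-a}`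
gives `r ((d+1) N) - r N = U_{dN-1} / (U_{N-1} U_{(d+1)N-1})`, and the composition identity
`(U_a ∘ T_N) · U_{N-1} = U_{(a+1)N-1}` (for `a = d - 1` and `a = d`) turns this into
`(U_{d-1} ∘ T_N) / U_{(d+1)N-1}`, where `U_{(d+1)^{k+1}-1} = ∏_{j ≤ k} U_d ∘ T_{(d+1)^j}`.
So the `k`-th summand of `S_{n,d}` is `r ((d+1)^{k+1}) - r ((d+1)^k)`, and the sum telescopes
to `r ((d+1)^{n+1}) - r 1 = r ((d+1)^{n+1})`.
-/

namespace Polynomial.Chebyshev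

variable (R : Type*) [CommRing R]

theorem T_mul_U (m k : ℤ) : 2 * T R m * U R k = U R (k + m) + U R (k - m) := by
  induction m using Polynomial.Chebyshev.induct with
  | zero => simp [two_mul]
  | one => rw [T_one, U_add_one R k]; ring
  | add_two m ih1 ih2 =>
    have h₁ := U_add_two R (k + m)
    have h₂ := U_sub_two R (k - m)
    have h₃ := T_add_two R m
    linear_combination (norm := ring_nf) U R k * 2 * h₃ - h₂ - h₁ - ih2 + 2 * (X : R[X]) * ih1
  | neg_add_one m ih1 ih2 =>
    have h₁ := U_add_two R (k + (-m - 1))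
    have h₂ := U_sub_two R (k - (-m - 1))
    have h₃ := T_add_two R (-m - 1)
    linear_combination (norm := ring_nf) U R k * 2 * h₃ - h₂ - h₁ - ih2 + 2 * (X : R[X]) * ih1

theorem U_comp_T_mul_U (a n : ℤ) :
    (U R a).comp (T R n) * U R (n - 1) = U R ((a + 1) * n - 1) := by
  induction a using Polynomial.Chebyshev.induct with
  | zero => simp
  | one =>
    have h := T_mul_U R n (n - 1)
    rw [show n - 1 - n = -1 by ring, U_neg_one] at h
    simp only [U_one, mul_comp, ofNat_comp, X_comp]
    linear_combination (norm := ring_nf) h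
  | add_two a ih1 ih2 =>
    have h₁ := T_mul_U R n ((a + 2) * n - 1)
    have h₂ := congr_arg (comp · (T R n)) (U_add_two R a)
    simp only [sub_comp, mul_comp, ofNat_comp, X_comp] at h₂
    linear_combination (norm := ring_nf) U R (n - 1) * h₂ + 2 * T R n * ih1 - ih2 + h₁
  | neg_add_one a ih1 ih2 =>
    have h₁ := T_mul_U R n ((-a + 1) * n - 1)
    have h₂ := congr_arg (comp · (T R n)) (U_add_two R (-a - 1))
    simp only [sub_comp, mul_comp, ofNat_comp, X_comp] at h₂
    linear_combination (norm := ring_nf) U R (n - 1) * h₂ + 2 * T R n * ih1 - ih2 + h₁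

theorem U_mul_U_sub_U_mul_U (a b : ℤ) :
    U R a * U R b - U R (a - 1) * U R (b + 1) = U R (b - a) := by
  induction a using Polynomial.Chebyshev.induct generalizing b with
  | zero => simp
  | one => simp only [U_one, sub_self, U_zero, one_mul]; linear_combination (U_sub_one R b).symm
  | add_two a ih1 _ =>
    have h₁ := U_add_two R a
    have h₂ := U_add_one R b
    linear_combination (norm := ring_nf) U R b * h₁ - U R (a + 1) * h₂ + ih1 (b - 1)
  | neg_add_one a ih1 _ =>
    have h₁ := U_add_two R (-a - 2)
    have h₂ := U_add_two R b
    linear_combination (norm := ring_nf) -U R (b + 1) * h₁ + U R (-a - 1) * h₂ + ih1 (b + 1)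

theorem prod_U_comp_T_pow (d : ℤ) (k : ℕ) :
    ∏ j ∈ range k, (U R d).comp (T R ((d + 1) ^ j)) = U R ((d + 1) ^ k - 1) := by
  induction k with
  | zero => simp
  | succ k ih => rw [prod_range_succ, ih, mul_comm, U_comp_T_mul_U, pow_succ']

end Polynomial.Chebyshev

noncomputable def ratioU (N : ℤ) : RatFunc ℚ := toRat (U ℚ (N - 2)) / toRat (U ℚ (N - 1))

theorem ratioU_one : ratioU 1 = 0 := by
  simp [ratioU, U_neg_one, toRat]

theorem ratioU_mul_sub (d N : ℤ) (h : (d + 1) * N ≠ 0) :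
    ratioU ((d + 1) * N) - ratioU N
      = toRat ((U ℚ (d - 1)).comp (T ℚ N)) / toRat (U ℚ ((d + 1) * N - 1)) := by
  have hB : toRat (U ℚ (N - 1)) ≠ 0 :=
    RatFunc.algebraMap_ne_zero (U_ne_zero ℚ _ (by have := right_ne_zero_of_mul h; omega))
  have hB' : toRat (U ℚ ((d + 1) * N - 1)) ≠ 0 :=
    RatFunc.algebraMap_ne_zero (U_ne_zero ℚ _ (by omega))
  have cassini :
      U ℚ (N - 1) * U ℚ ((d + 1) * N - 2) - U ℚ (N - 2) * U ℚ ((d + 1) * N - 1)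
        = (U ℚ (d - 1)).comp (T ℚ N) * U ℚ (N - 1) := by
    rw [U_comp_T_mul_U, show N - 2 = N - 1 - 1 by ring,
      show (d + 1) * N - 1 = (d + 1) * N - 2 + 1 by ring, U_mul_U_sub_U_mul_U]
    ring_nf
  rw [ratioU, ratioU, div_sub_div _ _ hB' hB, div_eq_div_iff (mul_ne_zero hB' hB) hB']
  have := congrArg toRat cassini
  simp only [toRat, map_sub, map_mul] at this hB' ⊢
  linear_combination algebraMap ℚ[X] (RatFunc ℚ) (U ℚ ((d + 1) * N - 1)) * this

theorem Sfrac_eq_general (n d : ℕ) :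
    Sfrac n d =
      toRat (U ℚ (((d : ℤ) + 1) ^ (n + 1) - 2)) / toRat (U ℚ (((d : ℤ) + 1) ^ (n + 1) - 1)) := by
  have telescope : Sfrac n d = ∑ k ∈ range (n + 1),
      (ratioU (((d : ℤ) + 1) ^ (k + 1)) - ratioU (((d : ℤ) + 1) ^ k)) := by
    refine sum_congr rfl fun k _ ↦ ?_
    rw [pow_succ', ratioU_mul_sub _ _ (by positivity), prod_inv_distrib, ← div_eq_mul_inv]
    simp only [toRat, ← map_prod, Nat.cast_pow, Nat.cast_add, Nat.cast_one]
    rw [prod_U_comp_T_pow, pow_succ']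
  rw [telescope, sum_range_sub (fun k ↦ ratioU (((d : ℤ) + 1) ^ k)), pow_zero, ratioU_one,
    sub_zero, ratioU]

theorem Sfrac_eq (n d : ℕ) (hd : 1 ≤ d) :
    Sfrac n d =
      toRat (U ℚ (((d : ℤ) + 1) ^ (n + 1) - 2)) / toRat (U ℚ (((d : ℤ) + 1) ^ (n + 1) - 1)) :=
  Sfrac_eq_general n d
end
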